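/- Let K, C : ℝ → ℝ be continuous with K t < 0 for all t, and let f : ℝ → ℝ satisfy f'' - C·f' + K·f = 0 with f 0 = 0 and f' 0 = -1. Then f'(t) ≠ 0 for all t ∈ ℝ. -/

import Mathlib

open Set Filter Topology

/-!
Suppose `f'` vanishes somewhere in `t ≥ 0` and let `c > 0` be its first zero. Then `f' < 0` on
`[0, c)`, so `f (c) < f 0 = 0`, and the equation at `c` gives `f'' (c) = -K (c) f (c) < 0`. But `f'`
rises from negative values to `0` at `c`, which forces `f'' (c) ≥ 0`. Negative times reduce to this
case through the reflection `s ↦ -f (-s)`, which solves the same kind of equation.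
-/

lemma exists_first_zero_of_neg {g : ℝ → ℝ} {a b : ℝ} (hg : ContinuousOn g (Icc a b))
    (ha : g a < 0) (hab : a ≤ b) (hb : g b = 0) :
    ∃ c ∈ Ioc a b, g c = 0 ∧ ∀ x ∈ Ico a c, g x < 0 := by
  set S := Icc a b ∩ g ⁻¹' {0}
  have hS : IsCompact S := isCompact_Icc.of_isClosed_subset
    (hg.preimage_isClosed_of_isClosed isClosed_Icc isClosed_singleton) inter_subset_left
  obtain ⟨c, ⟨⟨hac, hcb⟩, hc0⟩, hleast⟩ := hS.exists_isLeast ⟨b, ⟨hab, le_rfl⟩, hb⟩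
  have hac' : a < c := lt_of_le_of_ne hac (by rintro rfl; exact ha.ne hc0)
  refine ⟨c, ⟨hac', hcb⟩, hc0, fun x ⟨hax, hxc⟩ => ?_⟩
  by_contra! hx
  obtain ⟨y, ⟨hay, hyx⟩, hy0⟩ := intermediate_value_Icc hax (hg.mono (Icc_subset_Icc le_rfl
    (hxc.le.trans hcb))) ⟨ha.le, hx⟩
  have := hleast ⟨⟨hay, hyx.trans (hxc.le.trans hcb)⟩, hy0⟩
  linarith

lemma HasDerivAt.nonneg_of_le_left {g : ℝ → ℝ} {g' a b : ℝ} (hab : a < b) (hd : HasDerivAt g g' b)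
    (hle : ∀ x ∈ Ioo a b, g x ≤ g b) : 0 ≤ g' := by
  have hslope : Tendsto (slope g b) (𝓝[<] b) (𝓝 g') :=
    (hasDerivAt_iff_tendsto_slope.mp hd).mono_left (nhdsWithin_mono _ fun _ hx => ne_of_lt hx)
  refine ge_of_tendsto hslope ?_
  filter_upwards [Ioo_mem_nhdsLT hab] with x hx
  rw [slope_def_field]
  exact div_nonneg_of_nonpos (by linarith [hle x hx]) (by linarith [hx.2])

lemma deriv_neg_comp_neg (f : ℝ → ℝ) : deriv (fun s => -f (-s)) = fun s => deriv f (-s) := by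
  funext s
  rw [show (fun s => -f (-s)) = -fun s => f (-s) from rfl, deriv.neg, deriv_comp_neg, neg_neg]

section JacobiEquation

variable {K C f : ℝ → ℝ}

lemma jacobi_equation_reflect
    (hode : ∀ t, deriv (deriv f) t - C t * deriv f t + K t * f t = 0) (s : ℝ) :
    deriv (deriv fun s => -f (-s)) s - -C (-s) * deriv (fun s => -f (-s)) s
      + K (-s) * -f (-s) = 0 := by
  rw [deriv_neg_comp_neg, deriv_comp_neg]
  linarith [hode (-s)]

lemma jacobi_deriv_ne_zero_of_nonneg (hKneg : ∀ t, K t < 0) (hf : ContDiff ℝ 2 f)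
    (hode : ∀ t, deriv (deriv f) t - C t * deriv f t + K t * f t = 0)
    (h0 : f 0 ≤ 0) (h0' : deriv f 0 < 0) {t : ℝ} (ht : 0 ≤ t) : deriv f t ≠ 0 := by
  intro ht0
  have hf' : ContDiff ℝ 1 (deriv f) := hf.deriv'
  obtain ⟨c, hc, hc0, hneg⟩ :=
    exists_first_zero_of_neg hf'.continuous.continuousOn h0' ht ht0
  have hfc : f c < 0 := by
    have hanti : StrictAntiOn f (Icc 0 c) :=
      strictAntiOn_of_deriv_neg (convex_Icc 0 c) hf.continuous.continuousOn fun x hx =>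
        hneg x (Ioo_subset_Ico_self (by simpa using hx))
    have := hanti (left_mem_Icc.2 hc.1.le) (right_mem_Icc.2 hc.1.le) hc.1
    linarith
  have hpp_neg : deriv (deriv f) c < 0 := by
    have := hode c
    rw [hc0] at this
    nlinarith [hKneg c]
  have hpp_nonneg : 0 ≤ deriv (deriv f) c :=
    ((hf'.differentiable one_ne_zero) c).hasDerivAt.nonneg_of_le_left hc.1 fun x hx => by
      rw [hc0]
      exact (hneg x (Ioo_subset_Ico_self hx)).le
  linarith

end JacobiEquation

theorem finsler_jacobi_deriv_ne_zero_general (K C f : ℝ → ℝ)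
    (hKneg : ∀ t, K t < 0)
    (hf : ContDiff ℝ 2 f)
    (hode : ∀ t, deriv (deriv f) t - C t * deriv f t + K t * f t = 0)
    (h0 : f 0 = 0) (h0' : deriv f 0 = -1) :
    ∀ t, deriv f t ≠ 0 := by
  intro t
  rcases le_or_gt 0 t with ht | ht
  · exact jacobi_deriv_ne_zero_of_nonneg hKneg hf hode h0.le (by rw [h0']; norm_num) ht
  · have hreflect := jacobi_deriv_ne_zero_of_nonneg (K := fun s => K (-s))
      (C := fun s => -C (-s)) (f := fun s => -f (-s)) (fun s => hKneg (-s))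
      (hf.comp contDiff_neg).neg (jacobi_equation_reflect hode) (by simp [h0])
      (by simp only [deriv_neg_comp_neg, neg_zero, h0']; norm_num) (neg_nonneg.2 ht.le)
    simpa only [deriv_neg_comp_neg, neg_neg] using hreflect

theorem finsler_jacobi_deriv_ne_zero (K C f : ℝ → ℝ)
    (hK : Continuous K) (hC : Continuous C) (hKneg : ∀ t, K t < 0)
    (hf : ContDiff ℝ 2 f)
    (hode : ∀ t, deriv (deriv f) t - C t * deriv f t + K t * f t = 0)
    (h0 : f 0 = 0) (h0' : deriv f 0 = -1) :
    ∀ t, deriv f t ≠ 0 :=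
  finsler_jacobi_deriv_ne_zero_general K C f hKneg hf hode h0 h0'
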